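/- With the same setup, for any two distinct unclaimed vertices v₁, v₂, either Δ_{M←v₂}(σ_{M←v₁}) ≤ λ^{−1}·Δ_{M←v₁}(σ), or the same inequality holds with the roles of v₁ and v₂ exchanged, i.e. Δ_{M←v₁}(σ_{M←v₂}) ≤ λ^{−1}·Δ_{M←v₂}(σ). -/

import Mathlib

/-! Moving an unclaimed vertex `v` to `M` multiplies the weight of every hyperedge through `v`
by `λ⁻¹ ≥ 1` and leaves the others alone. Writing `t = λ⁻¹` and `p, q ∈ {1, t}` for the factors of
`v₁, v₂` on a hyperedge of weight `a`, the two slacks `t Δ_{M←vᵢ}(σ) - Δ_{M←vⱼ}(σ_{M←vᵢ})` add up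
on that hyperedge to `((t - q)(p - 1) + (t - p)(q - 1)) a ≥ 0`. Summing over the hyperedges, the
two total slacks have a nonnegative sum, so one of them is nonnegative. -/

open scoped Classical

inductive Mark : Type
  | U | M | B
deriving DecidableEq

noncomputable def wS {V : Type*} (lam : ℝ) (σ : V → Mark) (S : Finset V) : ℝ :=
  if ∀ v ∈ S, σ v ≠ Mark.B then lam ^ (S.filter fun v => σ v = Mark.U).card else 0

noncomputable def totalW {V : Type*} (lam : ℝ) (E : Set (Finset V)) (σ : V → Mark) : ℝ :=
  ∑' S : E, wS lam σ S.1

section Weight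

variable {V : Type*} {lam : ℝ}

lemma wS_nonneg (h0 : 0 < lam) (σ : V → Mark) (S : Finset V) : 0 ≤ wS lam σ S := by
  unfold wS
  split_ifs
  · positivity
  · exact le_rfl

lemma update_M_ne_B_iff {σ : V → Mark} {v u : V} (hv : σ v = Mark.U) :
    Function.update σ v Mark.M u ≠ Mark.B ↔ σ u ≠ Mark.B := by
  rcases eq_or_ne u v with rfl | h <;> simp [*]

lemma filter_update_M_eq_U (σ : V → Mark) (v : V) (S : Finset V) :
    S.filter (fun u => Function.update σ v Mark.M u = Mark.U)
      = (S.filter fun u => σ u = Mark.U).erase v := by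
  ext u
  rcases eq_or_ne u v with rfl | h <;> simp [*]

lemma wS_update_M (h0 : lam ≠ 0) {σ : V → Mark} {v : V} (hv : σ v = Mark.U) (S : Finset V) :
    wS lam (Function.update σ v Mark.M) S = (if v ∈ S then lam⁻¹ else 1) * wS lam σ S := by
  unfold wS
  simp only [update_M_ne_B_iff hv, filter_update_M_eq_U]
  split_ifs with hB hvS
  · have hvU : v ∈ S.filter fun u => σ u = Mark.U := Finset.mem_filter.2 ⟨hvS, hv⟩
    rw [← Finset.card_erase_add_one hvU, pow_succ]
    field_simp
  · rw [one_mul, Finset.erase_eq_of_notMem fun h => hvS (Finset.mem_filter.1 h).1]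
  all_goals rw [mul_zero]

lemma ite_inv_mem_Icc (h0 : 0 < lam) (h1 : lam < 1) (P : Prop) [Decidable P] :
    (if P then lam⁻¹ else 1) ∈ Set.Icc 1 lam⁻¹ := by
  have ht : 1 ≤ lam⁻¹ := (one_le_inv₀ h0).2 h1.le
  split_ifs
  · exact ⟨ht, le_rfl⟩
  · exact ⟨le_rfl, ht⟩

end Weight

lemma add_slacks_nonneg {t p q a : ℝ} (hp : 1 ≤ p) (hpt : p ≤ t) (hq : 1 ≤ q) (hqt : q ≤ t)
    (ha : 0 ≤ a) :
    0 ≤ (t * (p * a - a) - (q * (p * a) - p * a)) + (t * (q * a - a) - (q * (p * a) - q * a)) :=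
  calc 0 ≤ (t - q) * (p - 1) * a + (t - p) * (q - 1) * a :=
        add_nonneg (mul_nonneg (mul_nonneg (sub_nonneg.2 hqt) (sub_nonneg.2 hp)) ha)
          (mul_nonneg (mul_nonneg (sub_nonneg.2 hpt) (sub_nonneg.2 hq)) ha)
    _ = _ := by ring

lemma tsum_slack {ι : Type*} {t : ℝ} {a b c : ι → ℝ}
    (ha : Summable a) (hb : Summable b) (hc : Summable c) :
    ∑' i, (t * (b i - a i) - (c i - b i))
      = t * (∑' i, b i - ∑' i, a i) - (∑' i, c i - ∑' i, b i) := by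
  rw [((hb.sub ha).mul_left t).tsum_sub (hc.sub hb), tsum_mul_left, hb.tsum_sub ha,
    hc.tsum_sub hb]

theorem stmt_3_general {V : Type*} (lam : ℝ) (h0 : 0 < lam) (h1 : lam < 1)
    (E : Set (Finset V)) (σ : V → Mark) (v₁ v₂ : V) (hne : v₁ ≠ v₂)
    (hv₁ : σ v₁ = Mark.U) (hv₂ : σ v₂ = Mark.U)
    (hσ : Summable fun S : E => wS lam σ S.1)
    (h1M : Summable fun S : E => wS lam (Function.update σ v₁ Mark.M) S.1)
    (h2M : Summable fun S : E => wS lam (Function.update σ v₂ Mark.M) S.1)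
    (h12M : Summable fun S : E =>
      wS lam (Function.update (Function.update σ v₁ Mark.M) v₂ Mark.M) S.1) :
    (totalW lam E (Function.update (Function.update σ v₁ Mark.M) v₂ Mark.M)
        - totalW lam E (Function.update σ v₁ Mark.M)
      ≤ lam⁻¹ * (totalW lam E (Function.update σ v₁ Mark.M) - totalW lam E σ)) ∨
    (totalW lam E (Function.update (Function.update σ v₂ Mark.M) v₁ Mark.M)
        - totalW lam E (Function.update σ v₂ Mark.M)
      ≤ lam⁻¹ * (totalW lam E (Function.update σ v₂ Mark.M) - totalW lam E σ)) := by
  rw [Function.update_comm hne.symm]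
  have hσ₁v₂ : Function.update σ v₁ Mark.M v₂ = Mark.U := by
    rw [Function.update_of_ne hne.symm, hv₂]
  set σ₁ := Function.update σ v₁ Mark.M
  set σ₂ := Function.update σ v₂ Mark.M
  set σ₁₂ := Function.update σ₁ v₂ Mark.M
  have hsum : 0 ≤ ∑' S : E,
      ((lam⁻¹ * (wS lam σ₁ S - wS lam σ S) - (wS lam σ₁₂ S - wS lam σ₁ S))
        + (lam⁻¹ * (wS lam σ₂ S - wS lam σ S) - (wS lam σ₁₂ S - wS lam σ₂ S))) := by
    refine tsum_nonneg fun S => ?_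
    obtain ⟨hp, hpt⟩ := ite_inv_mem_Icc h0 h1 (v₁ ∈ S.1)
    obtain ⟨hq, hqt⟩ := ite_inv_mem_Icc h0 h1 (v₂ ∈ S.1)
    rw [wS_update_M h0.ne' hσ₁v₂, wS_update_M h0.ne' hv₁, wS_update_M h0.ne' hv₂]
    exact add_slacks_nonneg hp hpt hq hqt (wS_nonneg h0 σ S)
  rw [Summable.tsum_add (((h1M.sub hσ).mul_left _).sub (h12M.sub h1M))
    (((h2M.sub hσ).mul_left _).sub (h12M.sub h2M)), tsum_slack hσ h1M h12M,
    tsum_slack hσ h2M h12M] at hsum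
  unfold totalW
  by_contra! h
  linarith [h.1, h.2]

/-- Observation: either `Δ_{M←v₂}(σ_{M←v₁}) ≤ λ⁻¹·Δ_{M←v₁}(σ)` or the same with
`v₁` and `v₂` exchanged. -/
theorem stmt_3 {V : Type*} (lam : ℝ) (h0 : 0 < lam) (h1 : lam < 1)
    (E : Set (Finset V)) (σ : V → Mark) (v₁ v₂ : V) (hne : v₁ ≠ v₂)
    (hv₁ : σ v₁ = Mark.U) (hv₂ : σ v₂ = Mark.U)
    (hσ : Summable fun S : E => wS lam σ S.1)
    (h1M : Summable fun S : E => wS lam (Function.update σ v₁ Mark.M) S.1)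
    (h2M : Summable fun S : E => wS lam (Function.update σ v₂ Mark.M) S.1)
    (h12M : Summable fun S : E =>
      wS lam (Function.update (Function.update σ v₁ Mark.M) v₂ Mark.M) S.1)
    (h21M : Summable fun S : E =>
      wS lam (Function.update (Function.update σ v₂ Mark.M) v₁ Mark.M) S.1) :
    (totalW lam E (Function.update (Function.update σ v₁ Mark.M) v₂ Mark.M)
        - totalW lam E (Function.update σ v₁ Mark.M)
      ≤ lam⁻¹ * (totalW lam E (Function.update σ v₁ Mark.M) - totalW lam E σ)) ∨
    (totalW lam E (Function.update (Function.update σ v₂ Mark.M) v₁ Mark.M)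
        - totalW lam E (Function.update σ v₂ Mark.M)
      ≤ lam⁻¹ * (totalW lam E (Function.update σ v₂ Mark.M) - totalW lam E σ)) :=
  stmt_3_general lam h0 h1 E σ v₁ v₂ hne hv₁ hv₂ hσ h1M h2M h12M
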